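/- Termination of the conflict-analysis transition system: if DecVars is finite, then for any input formula F₀, the relation →c — the union of the rules decide, unitPropagate, conflict, explain, backjump, and learn over states (M, F, C, cflct) — is well-founded on the set of states reachable from the initial state ([], F₀, [], ⊥). -/

import Mathlib

namespace SatFormal

/-- Propositional literals: positive or negative variables (variables are naturals). -/
inductive Literal where
  | Pos : Nat → Literal
  | Neg : Nat → Literal
deriving DecidableEq, Repr

/-- The variable of a literal. -/
def Literal.var : Literal → Nat
  | .Pos n => n
  | .Neg n => n

/-- The opposite literal. -/
def Literal.opp : Literal → Literal
  | .Pos n => .Neg n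
  | .Neg n => .Pos n

abbrev Clause := List Literal
abbrev Formula := List Clause
/-- A trail is a list of annotated literals: (literal, decision flag). -/
abbrev Trail := List (Literal × Bool)

/-- Underlying literals of a trail. -/
def elements (M : Trail) : List Literal := M.map Prod.fst
/-- Decision literals of a trail. -/
def decisions (M : Trail) : List Literal := (M.filter (fun a => a.2)).map Prod.fst
/-- Number of decision literals. -/
def currentLevel (M : Trail) : Nat := (M.filter (fun a => a.2)).length

/-- Prefix of the trail up to and including the first occurrence of literal `l`. -/
def prefixTo (l : Literal) (M : Trail) : Trail :=
  M.takeWhile (fun a => decide (a.1 ≠ l)) ++ (M.dropWhile (fun a => decide (a.1 ≠ l))).take 1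

/-- Decision literals preceding the first occurrence of `l` (including `l` if it is one). -/
def decisionsTo (l : Literal) (M : Trail) : List Literal := decisions (prefixTo l M)

/-- Decision level of a literal in a trail. -/
def levelOf (l : Literal) (M : Trail) : Nat := (decisionsTo l M).length

/-- Longest prefix of the trail containing only elements of level ≤ `lv`. -/
def prefixToLevel (lv : Nat) : Trail → Trail
  | [] => []
  | a :: M =>
      if a.2 then (if 0 < lv then a :: prefixToLevel (lv - 1) M else [])
      else a :: prefixToLevel lv M

/-- The last decision literal of a trail (default `Pos 0` when there is none). -/
def lastDecision (M : Trail) : Literal := (decisions M).getLastD (Literal.Pos 0)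

/-- The prefix of the trail before its last decision literal. -/
def prefixBeforeLastDecision (M : Trail) : Trail :=
  ((M.reverse.dropWhile (fun a => !a.2)).tail).reverse

/-- A clause is true in a valuation. -/
def clauseTrue (v : List Literal) (c : Clause) : Prop := ∃ l ∈ c, l ∈ v
/-- A formula is true in a valuation. -/
def formulaTrue (v : List Literal) (F : Formula) : Prop := ∀ c ∈ F, clauseTrue v c
/-- A clause is false in a valuation. -/
def clauseFalse (v : List Literal) (c : Clause) : Prop := ∀ l ∈ c, l.opp ∈ v
/-- A formula is false in a valuation. -/
def formulaFalse (v : List Literal) (F : Formula) : Prop := ∃ c ∈ F, clauseFalse v c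
/-- Consistency of a valuation. -/
def consistent (v : List Literal) : Prop := ¬ ∃ l, l ∈ v ∧ Literal.opp l ∈ v
/-- A model of a formula. -/
def isModel (v : List Literal) (F : Formula) : Prop := consistent v ∧ formulaTrue v F
/-- Satisfiability. -/
def sat (F : Formula) : Prop := ∃ v, isModel v F
/-- A formula entails a clause. -/
def entailsClause (F : Formula) (c : Clause) : Prop := ∀ v, isModel v F → clauseTrue v c
/-- A formula entails a literal. -/
def entailsLit (F : Formula) (l : Literal) : Prop := ∀ v, isModel v F → l ∈ v
/-- Logical equivalence of formulae. -/
def equivFormula (F1 F2 : Formula) : Prop := ∀ v, isModel v F1 ↔ isModel v F2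

/-- Variables of a formula. -/
def varsF (F : Formula) : Set Nat := {n | ∃ c ∈ F, ∃ l ∈ c, Literal.var l = n}
/-- Variables of a valuation. -/
def varsV (v : List Literal) : Set Nat := {n | ∃ l ∈ v, Literal.var l = n}
/-- Variables of a trail. -/
def varsT (M : Trail) : Set Nat := varsV (elements M)

/-- The formula of unit clauses corresponding to a list of literals. -/
def valToForm (v : List Literal) : Formula := v.map (fun l => [l])

/-- A clause is unit in a valuation with unit literal `l`. -/
def isUnit (c : Clause) (l : Literal) (v : List Literal) : Prop :=
  l ∈ c ∧ l ∉ v ∧ l.opp ∉ v ∧ ∀ l' ∈ c, l' ≠ l → Literal.opp l' ∈ v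

/-- `a` precedes `b` in the list `v` (first positions compared). -/
def precedes (a b : Literal) (v : List Literal) : Prop :=
  a ∈ v ∧ b ∈ v ∧ v.idxOf a < v.idxOf b

/-- A clause `c` is a reason for propagation of `l` in valuation `v`. -/
def isReason (c : Clause) (l : Literal) (v : List Literal) : Prop :=
  l ∈ c ∧ l ∈ v ∧ ∀ l' ∈ c, l' ≠ l → Literal.opp l' ∈ v ∧ precedes (Literal.opp l') l v

/-- `l` is the literal of `c` asserted last in `v`. -/
def isLastAsserted (l : Literal) (c : List Literal) (v : List Literal) : Prop :=
  l ∈ c ∧ l ∈ v ∧ ∀ l' ∈ c, l' ∈ v → l' = l ∨ precedes l' l v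

/-- The list of opposites of the literals of a clause. -/
def oppC (c : Clause) : List Literal := c.map Literal.opp

/-- `lv` is a backjump level for literal `l` and clause `c` w.r.t. trail `M`. -/
def isBackjumpLevel (lv : Nat) (l : Literal) (c : Clause) (M : Trail) : Prop :=
  clauseFalse (elements M) c ∧ isLastAsserted l.opp (oppC c) (elements M) ∧
  lv < levelOf l.opp M ∧ ∀ l' ∈ c, l' ≠ l → levelOf (Literal.opp l') M ≤ lv

/-- Minimal backjump level. -/
def isMinimalBackjumpLevel (lv : Nat) (l : Literal) (c : Clause) (M : Trail) : Prop :=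
  isBackjumpLevel lv l c M ∧ ∀ lv' < lv, ¬ isBackjumpLevel lv' l c M

/-- Unique implication point condition. -/
def isUIP (l : Literal) (c : Clause) (M : Trail) : Prop :=
  clauseFalse (elements M) c ∧ isLastAsserted l.opp (oppC c) (elements M) ∧
  ∀ l' ∈ c, l' ≠ l → levelOf (Literal.opp l') M < levelOf l.opp M

/-- Resolution of clauses `C` and `c` over the literal `l`. -/
def resolve (C c : Clause) (l : Literal) : Clause :=
  C.filter (fun x => decide (x ≠ l)) ++ c.filter (fun x => decide (x ≠ l.opp))

/-- Lexicographic extension of a relation to lists. -/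
def lexExt {X : Type _} (r : X → X → Prop) (s t : List X) : Prop :=
  (∃ rr, s = t ++ rr ∧ rr ≠ []) ∨
  (∃ rr s' t' a b, s = rr ++ a :: s' ∧ t = rr ++ b :: t' ∧ r a b)

/-- Ordering on annotated literals: decisions are greater than non-decisions. -/
def litSucc (a b : Literal × Bool) : Prop := a.2 = true ∧ b.2 = false

/-- Trail ordering: lexicographic extension of `litSucc`. -/
def trailSucc : Trail → Trail → Prop := lexExt litSucc

/-- One step of the multiset extension of a relation. -/
def multExtStep {α : Type _} (r : α → α → Prop) (S1 S2 : Multiset α) : Prop :=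
  ∃ (S S2' : Multiset α) (s1 : α), S1 = S + {s1} ∧ S2 = S + S2' ∧ ∀ s2 ∈ S2', r s1 s2

/-- Multiset extension: transitive closure of `multExtStep`. -/
def multExt {α : Type _} (r : α → α → Prop) : Multiset α → Multiset α → Prop :=
  Relation.TransGen (multExtStep r)

/-- Clause ordering induced by a trail `M` (as a list of literals). -/
def clauseSucc (M : List Literal) (C1 C2 : Clause) : Prop :=
  multExt (fun a b => precedes a b M)
    ((oppC C2).dedup : Multiset Literal) ((oppC C1).dedup : Multiset Literal)

/-! ## Basic DPLL system -/

abbrev DState := Trail × Formula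

def decideR (DecVars : Set Nat) (s1 s2 : DState) : Prop :=
  ∃ l : Literal, l.var ∈ DecVars ∧ l ∉ elements s1.1 ∧ l.opp ∉ elements s1.1 ∧
    s2.1 = s1.1 ++ [(l, true)] ∧ s2.2 = s1.2

def unitPropagateR (s1 s2 : DState) : Prop :=
  ∃ c l, c ∈ s1.2 ∧ isUnit c l (elements s1.1) ∧
    s2.1 = s1.1 ++ [(l, false)] ∧ s2.2 = s1.2

def backtrackR (s1 s2 : DState) : Prop :=
  formulaFalse (elements s1.1) s1.2 ∧ decisions s1.1 ≠ [] ∧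
  s2.1 = prefixBeforeLastDecision s1.1 ++ [((lastDecision s1.1).opp, false)] ∧ s2.2 = s1.2

def stepD (DecVars : Set Nat) (s1 s2 : DState) : Prop :=
  unitPropagateR s1 s2 ∨ backtrackR s1 s2 ∨ decideR DecVars s1 s2

def accepting (DecVars : Set Nat) (s : DState) : Prop :=
  ¬ formulaFalse (elements s.1) s.2 ∧
  ¬ ∃ l : Literal, l.var ∈ DecVars ∧ l ∉ elements s.1 ∧ l.opp ∉ elements s.1

def rejecting (s : DState) : Prop :=
  formulaFalse (elements s.1) s.2 ∧ decisions s.1 = []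

/-! ## Conflict analysis system -/

abbrev CState := Trail × Formula × Clause × Bool

def c_decide (DecVars : Set Nat) : CState → CState → Prop :=
  fun (M1, F1, C1, b1) (M2, F2, C2, b2) =>
    (∃ l : Literal, l.var ∈ DecVars ∧ l ∉ elements M1 ∧ l.opp ∉ elements M1 ∧
      M2 = M1 ++ [(l, true)]) ∧ F2 = F1 ∧ C2 = C1 ∧ b2 = b1

def c_unitPropagate (Vars : Set Nat) : CState → CState → Prop :=
  fun (M1, F1, C1, b1) (M2, F2, C2, b2) =>
    (∃ (c : Clause) (l : Literal), entailsClause F1 c ∧ l.var ∈ Vars ∧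
      isUnit c l (elements M1) ∧ M2 = M1 ++ [(l, false)]) ∧
    F2 = F1 ∧ C2 = C1 ∧ b2 = b1

def c_conflict : CState → CState → Prop :=
  fun (M1, F1, C1, b1) (M2, F2, C2, b2) =>
    b1 = false ∧ (∃ c : Clause, entailsClause F1 c ∧ clauseFalse (elements M1) c ∧ C2 = c) ∧
    M2 = M1 ∧ F2 = F1 ∧ b2 = true ∧ C1 = C1

def c_explain : CState → CState → Prop :=
  fun (M1, F1, C1, b1) (M2, F2, C2, b2) =>
    b1 = true ∧ (∃ (l : Literal) (c : Clause), l ∈ C1 ∧ isReason c l.opp (elements M1) ∧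
      entailsClause F1 c ∧ C2 = resolve C1 c l) ∧
    M2 = M1 ∧ F2 = F1 ∧ b2 = true

def c_backjump : CState → CState → Prop :=
  fun (M1, F1, C1, b1) (M2, F2, C2, b2) =>
    b1 = true ∧ (∃ (l : Literal) (lv : Nat), isBackjumpLevel lv l C1 M1 ∧
      M2 = prefixToLevel lv M1 ++ [(l, false)]) ∧
    F2 = F1 ∧ C2 = [] ∧ b2 = false

def c_learn : CState → CState → Prop :=
  fun (M1, F1, C1, b1) (M2, F2, C2, b2) =>
    b1 = true ∧ C1 ∉ F1 ∧ M2 = M1 ∧ F2 = F1 ++ [C1] ∧ C2 = C1 ∧ b2 = b1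

def stepC (F0 : Formula) (DecVars : Set Nat) (s1 s2 : CState) : Prop :=
  c_decide DecVars s1 s2 ∨ c_unitPropagate (varsF F0 ∪ DecVars) s1 s2 ∨
  c_conflict s1 s2 ∨ c_explain s1 s2 ∨ c_backjump s1 s2 ∨ c_learn s1 s2

/-! ## System with restarts and forgetting -/

abbrev RState := Trail × Formula × Clause × Bool × Bool

def r_decide (F0 : Formula) (DecVars : Set Nat) : RState → RState → Prop :=
  fun (M1, Fl1, C1, cf1, ln1) (M2, Fl2, C2, cf2, ln2) =>
    (∃ l : Literal, l.var ∈ DecVars ∧ l ∉ elements M1 ∧ l.opp ∉ elements M1 ∧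
      M2 = M1 ++ [(l, true)]) ∧
    (¬ ∃ (c : Clause) (l : Literal), c ∈ F0 ++ Fl1 ∧ isUnit c l (elements M1)) ∧
    Fl2 = Fl1 ∧ C2 = C1 ∧ cf2 = cf1 ∧ ln2 = ln1

def r_unitPropagate (F0 : Formula) : RState → RState → Prop :=
  fun (M1, Fl1, C1, cf1, ln1) (M2, Fl2, C2, cf2, ln2) =>
    (∃ (c : Clause) (l : Literal), c ∈ F0 ++ Fl1 ∧ isUnit c l (elements M1) ∧
      M2 = M1 ++ [(l, false)]) ∧
    Fl2 = Fl1 ∧ C2 = C1 ∧ cf2 = cf1 ∧ ln2 = ln1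

def r_conflict (F0 : Formula) : RState → RState → Prop :=
  fun (M1, Fl1, C1, cf1, ln1) (M2, Fl2, C2, cf2, ln2) =>
    cf1 = false ∧ (∃ c : Clause, c ∈ F0 ++ Fl1 ∧ clauseFalse (elements M1) c ∧ C2 = c) ∧
    M2 = M1 ∧ Fl2 = Fl1 ∧ cf2 = true ∧ ln2 = ln1 ∧ C1 = C1

def r_explain (F0 : Formula) : RState → RState → Prop :=
  fun (M1, Fl1, C1, cf1, ln1) (M2, Fl2, C2, cf2, ln2) =>
    cf1 = true ∧ (∃ (l : Literal) (c : Clause), l ∈ C1 ∧ isReason c l.opp (elements M1) ∧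
      c ∈ F0 ++ Fl1 ∧ C2 = resolve C1 c l) ∧
    M2 = M1 ∧ Fl2 = Fl1 ∧ cf2 = true ∧ ln2 = ln1

def r_backjumpLearn : RState → RState → Prop :=
  fun (M1, Fl1, C1, cf1, _ln1) (M2, Fl2, C2, cf2, ln2) =>
    cf1 = true ∧ (∃ (l : Literal) (lv : Nat), isMinimalBackjumpLevel lv l C1 M1 ∧
      M2 = prefixToLevel lv M1 ++ [(l, false)]) ∧
    Fl2 = Fl1 ++ [C1] ∧ C2 = [] ∧ cf2 = false ∧ ln2 = true

def r_forget : RState → RState → Prop :=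
  fun (M1, Fl1, C1, cf1, ln1) (M2, Fl2, C2, cf2, ln2) =>
    cf1 = false ∧ ln1 = true ∧
    (∃ Fc : Formula, (∀ c ∈ Fc, c ∈ Fl1) ∧
      (∀ c ∈ Fc, ¬ ∃ l : Literal, isReason c l (elements M1)) ∧
      Fl2 = Fl1.filter (fun c => decide (c ∉ Fc))) ∧
    M2 = M1 ∧ C2 = C1 ∧ cf2 = cf1 ∧ ln2 = false

def r_restart : RState → RState → Prop :=
  fun (M1, Fl1, C1, cf1, ln1) (M2, Fl2, C2, cf2, ln2) =>
    cf1 = false ∧ ln1 = true ∧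
    M2 = prefixToLevel 0 M1 ∧ Fl2 = Fl1 ∧ C2 = C1 ∧ cf2 = cf1 ∧ ln2 = false

/-- The system without `forget` (with `restart`). -/
def stepF (F0 : Formula) (DecVars : Set Nat) (s1 s2 : RState) : Prop :=
  r_decide F0 DecVars s1 s2 ∨ r_unitPropagate F0 s1 s2 ∨ r_conflict F0 s1 s2 ∨
  r_explain F0 s1 s2 ∨ r_backjumpLearn s1 s2 ∨ r_restart s1 s2

/-- The full system with both `restart` and `forget`. -/
def stepAll (F0 : Formula) (DecVars : Set Nat) (s1 s2 : RState) : Prop :=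
  stepF F0 DecVars s1 s2 ∨ r_forget s1 s2

/-- Normalization of a formula: remove duplicate literals and duplicate clauses. -/
def normF (F : Formula) : Formula := (F.map List.dedup).dedup

/-! Every rule decreases a lexicographic rank of the state. On a reachable trail the
variables are distinct and lie in the finite set `vars F₀ ∪ DecVars`, of size `N` say, so the
trail is a word of length at most `N` over the letters propagated < decision < empty, and
`decide`, `unitPropagate` and `backjump` decrease that word lexicographically. The other rules
keep the trail: `conflict` lowers the flag, `explain` replaces a literal of the conflict clause
by literals whose negations were asserted earlier, which lowers the set of trail positions of the
clause in colex order (encoded as `∑ 2 ^ j`), and `learn` adds the clause to the formula. -/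

namespace Literal

theorem opp_opp (l : Literal) : l.opp.opp = l := by cases l <;> rfl

theorem var_opp (l : Literal) : l.opp.var = l.var := by cases l <;> rfl

theorem opp_ne (l : Literal) : l.opp ≠ l := by cases l <;> simp [opp]

theorem opp_injective : Function.Injective opp :=
  Function.LeftInverse.injective opp_opp

theorem eq_or_eq_opp_of_var_eq {a b : Literal} (h : a.var = b.var) : a = b ∨ a = b.opp := by
  cases a <;> cases b <;> simp_all [var, opp]

end Literal

@[simp] theorem elements_nil : elements [] = [] := rfl

@[simp] theorem elements_cons (a : Literal × Bool) (M : Trail) :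
    elements (a :: M) = a.1 :: elements M := rfl

@[simp] theorem elements_append (M L : Trail) : elements (M ++ L) = elements M ++ elements L :=
  List.map_append ..

theorem prefixToLevel_prefix (lv : ℕ) (M : Trail) : prefixToLevel lv M <+: M := by
  induction M generalizing lv with
  | nil => exact List.nil_prefix
  | cons a M ih =>
    unfold prefixToLevel
    split_ifs
    exacts [(List.prefix_cons_inj a).2 (ih _), List.nil_prefix, (List.prefix_cons_inj a).2 (ih _)]

theorem currentLevel_mono {P M : Trail} (h : P <+: M) : currentLevel P ≤ currentLevel M :=
  (h.filter _).length_le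

theorem currentLevel_prefixToLevel_le (lv : ℕ) (M : Trail) :
    currentLevel (prefixToLevel lv M) ≤ lv := by
  induction M generalizing lv with
  | nil => simp [prefixToLevel, currentLevel]
  | cons a M ih =>
    have h₁ := ih (lv - 1)
    have h₂ := ih lv
    simp only [currentLevel] at h₁ h₂ ⊢
    unfold prefixToLevel
    split_ifs with ha hlv
    · simp only [ha, List.filter_cons_of_pos, List.length_cons]; omega
    · simp
    · simpa [ha] using h₂

theorem exists_decision_of_lt_currentLevel {lv : ℕ} {M : Trail} (h : lv < currentLevel M) :
    ∃ d R, M = prefixToLevel lv M ++ (d, true) :: R := by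
  induction M generalizing lv with
  | nil => simp [currentLevel] at h
  | cons a M ih =>
    obtain ⟨x, _ | _⟩ := a
    · obtain ⟨d, R, hM⟩ := ih (lv := lv) (by simpa [currentLevel] using h)
      exact ⟨d, R, by simp [prefixToLevel, ← hM]⟩
    · rcases Nat.eq_zero_or_pos lv with rfl | hlv
      · exact ⟨x, M, by simp [prefixToLevel]⟩
      · obtain ⟨d, R, hM⟩ := ih (lv := lv - 1) (by
          simp only [currentLevel, List.filter_cons_of_pos, List.length_cons] at h ⊢
          omega)
        exact ⟨d, R, by simp [prefixToLevel, hlv, ← hM]⟩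

theorem prefixTo_cons (x : Literal) (a : Literal × Bool) (M : Trail) :
    prefixTo x (a :: M) = if a.1 = x then [a] else a :: prefixTo x M := by
  by_cases h : a.1 = x <;> simp [prefixTo, h]

theorem prefixTo_prefix (x : Literal) (M : Trail) : prefixTo x M <+: M := by
  induction M with
  | nil => simp [prefixTo]
  | cons a M ih =>
    rw [prefixTo_cons]
    split
    exacts [⟨M, rfl⟩, (List.prefix_cons_inj a).2 ih]

theorem prefixTo_append_of_mem {x : Literal} {P : Trail} (h : x ∈ elements P) (Q : Trail) :
    prefixTo x (P ++ Q) = prefixTo x P := by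
  induction P with
  | nil => simp at h
  | cons a P ih =>
    rw [List.cons_append, prefixTo_cons, prefixTo_cons]
    split
    · rfl
    · rw [ih (by simp_all [eq_comm])]

theorem levelOf_eq_currentLevel_prefixTo (x : Literal) (M : Trail) :
    levelOf x M = currentLevel (prefixTo x M) := by
  simp [levelOf, decisionsTo, decisions, currentLevel]

theorem levelOf_le_currentLevel (x : Literal) (M : Trail) : levelOf x M ≤ currentLevel M := by
  rw [levelOf_eq_currentLevel_prefixTo]
  exact currentLevel_mono (prefixTo_prefix x M)

theorem levelOf_le_currentLevel_of_mem_prefix {x : Literal} {P M : Trail} (hP : P <+: M)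
    (hx : x ∈ elements P) : levelOf x M ≤ currentLevel P := by
  obtain ⟨Q, rfl⟩ := hP
  rw [levelOf_eq_currentLevel_prefixTo, prefixTo_append_of_mem hx]
  exact currentLevel_mono (prefixTo_prefix x P)

structure WellFormedTrail (Vars : Set ℕ) (M : Trail) : Prop where
  nodup_vars : ((elements M).map Literal.var).Nodup
  var_mem : ∀ l ∈ elements M, l.var ∈ Vars

namespace WellFormedTrail

variable {Vars : Set ℕ} {M : Trail}

theorem opp_not_mem (h : WellFormedTrail Vars M) {l : Literal} (hl : l ∈ elements M) :
    l.opp ∉ elements M := fun hlo =>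
  l.opp_ne (List.inj_on_of_nodup_map h.nodup_vars hlo hl l.var_opp)

theorem length_le_ncard (h : WellFormedTrail Vars M) (hV : Vars.Finite) :
    M.length ≤ Vars.ncard := by
  have hsub : (((elements M).map Literal.var).toFinset : Set ℕ) ⊆ Vars := by
    intro n hn
    obtain ⟨l, hl, rfl⟩ := List.mem_map.1 (List.mem_toFinset.1 hn)
    exact h.var_mem l hl
  calc M.length = ((elements M).map Literal.var).toFinset.card := by
        rw [List.toFinset_card_of_nodup h.nodup_vars, List.length_map, elements, List.length_map]
    _ ≤ Vars.ncard := by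
        rw [← Set.ncard_coe_finset]
        exact Set.ncard_le_ncard hsub hV

theorem of_prefix (h : WellFormedTrail Vars M) {P : Trail} (hP : P <+: M) :
    WellFormedTrail Vars P :=
  ⟨((hP.map Prod.fst).map Literal.var).sublist.nodup h.nodup_vars,
    fun l hl => h.var_mem l ((hP.map Prod.fst).subset hl)⟩

theorem snoc (h : WellFormedTrail Vars M) {l : Literal} (hv : l.var ∈ Vars)
    (hl : l ∉ elements M) (hlo : l.opp ∉ elements M) (d : Bool) :
    WellFormedTrail Vars (M ++ [(l, d)]) := by
  have hvar : l.var ∉ (elements M).map Literal.var := by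
    intro hmem
    obtain ⟨x, hx, hxl⟩ := List.mem_map.1 hmem
    rcases Literal.eq_or_eq_opp_of_var_eq hxl with rfl | rfl
    exacts [hl hx, hlo hx]
  refine ⟨?_, ?_⟩
  · simpa [List.nodup_append, h.nodup_vars] using hvar
  · simpa [or_imp, forall_and] using ⟨h.var_mem, hv⟩

theorem backjump (h : WellFormedTrail Vars M) {lv : ℕ} {l : Literal} {C : Clause}
    (hbj : isBackjumpLevel lv l C M) :
    WellFormedTrail Vars (prefixToLevel lv M ++ [(l, false)]) := by
  obtain ⟨-, ⟨-, hlo, -⟩, hlv, -⟩ := hbj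
  have hP := prefixToLevel_prefix lv M
  refine (h.of_prefix hP).snoc ?_ (fun hl => h.opp_not_mem ((hP.map Prod.fst).subset hl) hlo)
    (fun hlo' => ?_) false
  · simpa [Literal.var_opp] using h.var_mem _ hlo
  · have := (levelOf_le_currentLevel_of_mem_prefix hP hlo').trans
      (currentLevel_prefixToLevel_le lv M)
    omega

end WellFormedTrail

def trailDigit : Option (Literal × Bool) → ℕ
  | none => 2
  | some a => a.2.toNat

def trailRank (N : ℕ) (M : Trail) : Lex (Fin N → ℕ) :=
  toLex fun i => trailDigit M[i.val]?

theorem trailRank_append_lt {N : ℕ} {P X Y : Trail} (hP : P.length < N)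
    (h : trailDigit X.head? < trailDigit Y.head?) :
    trailRank N (P ++ X) < trailRank N (P ++ Y) :=
  ⟨⟨P.length, hP⟩,
    fun j hj => by simp [trailRank, List.getElem?_append_left (Fin.lt_def.1 hj)],
    by simpa [trailRank, List.getElem?_append_right, List.head?_eq_getElem?] using h⟩

theorem trailRank_snoc_lt {N : ℕ} {M : Trail} (hM : M.length < N) (a : Literal × Bool) :
    trailRank N (M ++ [a]) < trailRank N M := by
  simpa using
    trailRank_append_lt (Y := []) hM (by obtain ⟨x, _ | _⟩ := a <;> simp [trailDigit])

theorem trailRank_backjump_lt {N : ℕ} {P R : Trail} (hP : P.length < N) (l d : Literal) :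
    trailRank N (P ++ [(l, false)]) < trailRank N (P ++ (d, true) :: R) :=
  trailRank_append_lt hP (by simp [trailDigit])

def clauseRank (v : List Literal) (C : Clause) : ℕ :=
  ∑ j ∈ (C.map fun l => v.idxOf l.opp).toFinset, 2 ^ j

theorem mem_resolve {x l : Literal} {C c : Clause} :
    x ∈ resolve C c l ↔ (x ∈ C ∧ x ≠ l) ∨ (x ∈ c ∧ x ≠ l.opp) := by
  simp [resolve]

theorem clauseRank_resolve_lt {v : List Literal} {C c : Clause} {l : Literal} (hl : l ∈ C)
    (hC : clauseFalse v C) (hc : isReason c l.opp v) :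
    clauseRank v (resolve C c l) < clauseRank v C := by
  rw [clauseRank, clauseRank, Finset.geomSum_lt_geomSum_iff_toColex_lt_toColex le_rfl,
    Finset.Colex.toColex_lt_toColex_iff_exists_forall_lt]
  have earlier : ∀ x ∈ c, x ≠ l.opp → v.idxOf x.opp < v.idxOf l.opp :=
    fun x hx hxl => (hc.2.2 x hx hxl).2.2.2
  refine ⟨v.idxOf l.opp, List.mem_toFinset.2 (List.mem_map_of_mem hl), ?_, ?_⟩
  · simp only [List.mem_toFinset, List.mem_map, not_exists, not_and]
    intro x hx heq
    rcases mem_resolve.1 hx with ⟨hxC, hxl⟩ | ⟨hxc, hxl⟩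
    · exact hxl (Literal.opp_injective ((List.idxOf_inj (hC x hxC)).1 heq))
    · exact (earlier x hxc hxl).ne heq
  · intro j hj hjC
    obtain ⟨x, hx, rfl⟩ := List.mem_map.1 (List.mem_toFinset.1 hj)
    rcases mem_resolve.1 hx with ⟨hxC, -⟩ | ⟨hxc, hxl⟩
    · exact absurd (List.mem_toFinset.2 (List.mem_map_of_mem hxC)) hjC
    · exact earlier x hxc hxl

structure StateInvariant (Vars : Set ℕ) (s : CState) : Prop where
  trail : WellFormedTrail Vars s.1
  clauseFalse_of_conflict : s.2.2.2 = true → clauseFalse (elements s.1) s.2.2.1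

def stateRank (N : ℕ) : CState → Lex (Fin N → ℕ) ×ₗ ℕ ×ₗ ℕ ×ₗ ℕ
  | (M, F, C, b) =>
    toLex (trailRank N M,
      toLex ((!b).toNat, toLex (clauseRank (elements M) C, if C ∈ F then 0 else 1)))

section stateRank

variable {N : ℕ} {M M' : Trail} {F F' : Formula} {C C' : Clause} {b b' : Bool}

theorem stateRank_lt_of_trailRank_lt (h : trailRank N M' < trailRank N M) :
    stateRank N (M', F', C', b') < stateRank N (M, F, C, b) :=
  Prod.Lex.toLex_lt_toLex.2 (Or.inl h)

theorem stateRank_conflict_lt : stateRank N (M, F', C', true) < stateRank N (M, F, C, false) :=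
  Prod.Lex.toLex_lt_toLex.2 (Or.inr ⟨rfl, Prod.Lex.toLex_lt_toLex.2 (Or.inl Nat.zero_lt_one)⟩)

theorem stateRank_lt_of_clauseRank_lt
    (h : clauseRank (elements M) C' < clauseRank (elements M) C) :
    stateRank N (M, F', C', true) < stateRank N (M, F, C, true) :=
  Prod.Lex.toLex_lt_toLex.2 (Or.inr ⟨rfl, Prod.Lex.toLex_lt_toLex.2
    (Or.inr ⟨rfl, Prod.Lex.toLex_lt_toLex.2 (Or.inl h)⟩)⟩)

theorem stateRank_learn_lt (h : C ∉ F) :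
    stateRank N (M, F ++ [C], C, true) < stateRank N (M, F, C, true) :=
  Prod.Lex.toLex_lt_toLex.2 (Or.inr ⟨rfl, Prod.Lex.toLex_lt_toLex.2
    (Or.inr ⟨rfl, Prod.Lex.toLex_lt_toLex.2 (Or.inr ⟨rfl, by simp [h]⟩)⟩)⟩)

end stateRank

theorem clauseFalse_append {v : List Literal} {C : Clause} (h : clauseFalse v C)
    (w : List Literal) : clauseFalse (v ++ w) C :=
  fun x hx => List.mem_append_left w (h x hx)

theorem StateInvariant.snoc {Vars : Set ℕ} {M : Trail} {F : Formula} {C : Clause} {b : Bool}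
    (h : StateInvariant Vars (M, F, C, b)) {l : Literal} (hv : l.var ∈ Vars)
    (hl : l ∉ elements M) (hlo : l.opp ∉ elements M) (d : Bool) :
    StateInvariant Vars (M ++ [(l, d)], F, C, b) :=
  ⟨h.trail.snoc hv hl hlo d, fun hb => by
    simpa only [elements_append] using clauseFalse_append (h.clauseFalse_of_conflict hb) _⟩

section stepC

variable {F0 : Formula} {DecVars : Set ℕ} {s₁ s₂ : CState}

theorem StateInvariant.step (h : StateInvariant (varsF F0 ∪ DecVars) s₁)
    (hs : stepC F0 DecVars s₁ s₂) : StateInvariant (varsF F0 ∪ DecVars) s₂ := by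
  obtain ⟨M₁, F₁, C₁, b₁⟩ := s₁
  obtain ⟨M₂, F₂, C₂, b₂⟩ := s₂
  rcases hs with ⟨⟨l, hv, hl, hlo, rfl⟩, rfl, rfl, rfl⟩ |
    ⟨⟨c, l, -, hv, hu, rfl⟩, rfl, rfl, rfl⟩ |
    ⟨rfl, ⟨c, -, hc, rfl⟩, rfl, rfl, rfl, -⟩ |
    ⟨rfl, ⟨l, c, -, hc, -, rfl⟩, rfl, rfl, rfl⟩ |
    ⟨rfl, ⟨l, lv, hbj, rfl⟩, rfl, rfl, rfl⟩ |
    ⟨rfl, -, rfl, rfl, rfl, rfl⟩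
  · exact h.snoc (Or.inr hv) hl hlo true
  · exact h.snoc hv hu.2.1 hu.2.2.1 false
  · exact ⟨h.trail, fun _ => hc⟩
  · refine ⟨h.trail, fun _ x hx => ?_⟩
    rcases mem_resolve.1 hx with ⟨hxC, -⟩ | ⟨hxc, hxl⟩
    exacts [h.clauseFalse_of_conflict rfl x hxC, (hc.2.2 x hxc hxl).1]
  · exact ⟨h.trail.backjump hbj, nofun⟩
  · exact ⟨h.trail, h.clauseFalse_of_conflict⟩

theorem stateRank_lt_of_stepC (hV : (varsF F0 ∪ DecVars).Finite)
    (h₁ : StateInvariant (varsF F0 ∪ DecVars) s₁)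
    (h₂ : StateInvariant (varsF F0 ∪ DecVars) s₂)
    (hs : stepC F0 DecVars s₁ s₂) :
    stateRank (varsF F0 ∪ DecVars).ncard s₂ < stateRank (varsF F0 ∪ DecVars).ncard s₁ := by
  have hlen₁ := h₁.trail.length_le_ncard hV
  have hlen₂ := h₂.trail.length_le_ncard hV
  obtain ⟨M₁, F₁, C₁, b₁⟩ := s₁
  obtain ⟨M₂, F₂, C₂, b₂⟩ := s₂
  rcases hs with ⟨⟨l, -, -, -, rfl⟩, rfl, rfl, rfl⟩ |
    ⟨⟨c, l, -, -, -, rfl⟩, rfl, rfl, rfl⟩ |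
    ⟨rfl, -, rfl, rfl, rfl, -⟩ |
    ⟨rfl, ⟨l, c, hl, hc, -, rfl⟩, rfl, rfl, rfl⟩ |
    ⟨rfl, ⟨l, lv, hbj, rfl⟩, rfl, rfl, rfl⟩ |
    ⟨rfl, hC, rfl, rfl, rfl, rfl⟩
  iterate 2
    exact stateRank_lt_of_trailRank_lt (trailRank_snoc_lt
      (by simp only [List.length_append, List.length_singleton] at hlen₂; omega) _)
  · exact stateRank_conflict_lt
  · exact stateRank_lt_of_clauseRank_lt
      (clauseRank_resolve_lt hl (h₁.clauseFalse_of_conflict rfl) hc)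
  · obtain ⟨-, -, hlv, -⟩ := hbj
    obtain ⟨d, R, hM⟩ := exists_decision_of_lt_currentLevel
      (hlv.trans_le (levelOf_le_currentLevel _ _))
    have hP : (prefixToLevel lv M₁).length < (varsF F0 ∪ DecVars).ncard := by
      rw [hM] at hlen₁
      simp only [List.length_append, List.length_cons] at hlen₁
      omega
    have := trailRank_backjump_lt (R := R) hP l d
    rw [← hM] at this
    exact stateRank_lt_of_trailRank_lt this
  · exact stateRank_learn_lt hC

end stepC

theorem varsF_finite (F : Formula) : (varsF F).Finite :=
  (List.finite_toSet (F.flatten.map Literal.var)).subset fun _ ⟨c, hc, l, hl, hn⟩ =>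
    List.mem_map.2 ⟨l, List.mem_flatten.2 ⟨c, hc, hl⟩, hn⟩

theorem StateInvariant.of_reachable {F0 : Formula} {DecVars : Set ℕ} {s : CState}
    (hs : Relation.ReflTransGen (stepC F0 DecVars) ([], F0, [], false) s) :
    StateInvariant (varsF F0 ∪ DecVars) s := by
  induction hs with
  | refl => exact ⟨⟨List.nodup_nil, nofun⟩, nofun⟩
  | tail _ hstep ih => exact ih.step hstep

/-- termination of the conflict-analysis transition system on reachable
states. -/
theorem stmt16 (DecVars : Set Nat) (hfin : DecVars.Finite) (F0 : Formula) :
    WellFounded (fun s2 s1 : CState =>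
      Relation.ReflTransGen (stepC F0 DecVars) ([], F0, [], false) s1 ∧
      stepC F0 DecVars s1 s2) := by
  have hV : (varsF F0 ∪ DecVars).Finite := (varsF_finite F0).union hfin
  refine Subrelation.wf (fun {s₂ s₁} ⟨hr, hs⟩ => ?_)
    (InvImage.wf (stateRank (varsF F0 ∪ DecVars).ncard) wellFounded_lt)
  have h₁ := StateInvariant.of_reachable hr
  exact stateRank_lt_of_stepC hV h₁ (h₁.step hs) hs

end SatFormal
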